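/- Let G be a finite connected k-regular simple graph on n ≥ 1 vertices with at least one edge and let d ≥ 0 be an integer, and suppose χ^d(G) = (λ₁ − λₙ)/(d − λₙ) = m. Then in every d-improper colouring of G with m colours, the partition into colour classes is equitable: every vertex has exactly d neighbours in its own colour class and exactly d − λₙ neighbours in every other colour class, and all colour classes have the same size. -/

import Mathlib

open SimpleGraph Finset Matrix

namespace ImproperPaper

variable {V W : Type*}

/-- The strong product of two simple graphs. -/
def strongProd (G : SimpleGraph V) (H : SimpleGraph W) : SimpleGraph (V × W) where
  Adj p q := (p.1 = q.1 ∧ H.Adj p.2 q.2) ∨ (G.Adj p.1 q.1 ∧ p.2 = q.2) ∨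
    (G.Adj p.1 q.1 ∧ H.Adj p.2 q.2)
  symm := by
    constructor
    rintro ⟨a, b⟩ ⟨x, y⟩ (⟨h1, h2⟩ | ⟨h1, h2⟩ | ⟨h1, h2⟩)
    · exact Or.inl ⟨h1.symm, h2.symm⟩
    · exact Or.inr (Or.inl ⟨h1.symm, h2.symm⟩)
    · exact Or.inr (Or.inr ⟨h1.symm, h2.symm⟩)
  loopless := by
    constructor
    rintro ⟨a, b⟩ (⟨h1, h2⟩ | ⟨h1, h2⟩ | ⟨h1, h2⟩)
    · exact H.irrefl h2
    · exact G.irrefl h1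
    · exact G.irrefl h1

/-- The lexicographical product of two simple graphs. -/
def lexProd (G : SimpleGraph V) (H : SimpleGraph W) : SimpleGraph (V × W) where
  Adj p q := G.Adj p.1 q.1 ∨ (p.1 = q.1 ∧ H.Adj p.2 q.2)
  symm := by
    constructor
    rintro ⟨a, b⟩ ⟨x, y⟩ (h | ⟨h1, h2⟩)
    · exact Or.inl h.symm
    · exact Or.inr ⟨h1.symm, h2.symm⟩
  loopless := by
    constructor
    rintro ⟨a, b⟩ (h | ⟨h1, h2⟩)
    · exact G.irrefl h
    · exact H.irrefl h2

instance {G : SimpleGraph V} {H : SimpleGraph W} [DecidableEq V] [DecidableEq W]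
    [DecidableRel G.Adj] [DecidableRel H.Adj] : DecidableRel (strongProd G H).Adj := fun p q =>
  show Decidable ((p.1 = q.1 ∧ H.Adj p.2 q.2) ∨ (G.Adj p.1 q.1 ∧ p.2 = q.2) ∨
    (G.Adj p.1 q.1 ∧ H.Adj p.2 q.2)) from inferInstance

/-- A colouring is `d`-improper if every colour class induces a subgraph of
maximum degree at most `d`. -/
def IsImproperColoring (G : SimpleGraph V) (d : ℕ) {α : Type*} (c : V → α) : Prop :=
  ∀ v : V, ({w | G.Adj v w ∧ c w = c v} : Set V).ncard ≤ d

/-- The `d`-improper chromatic number. -/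
noncomputable def improperChromaticNumber (G : SimpleGraph V) (d : ℕ) : ℕ :=
  sInf {n | ∃ c : V → Fin n, IsImproperColoring G d c}

/-- A colouring is `t`-clustered if every monochromatic connected component has at
most `t` vertices. -/
def IsClusteredColoring (G : SimpleGraph V) (t : ℕ) {α : Type*} (c : V → α) : Prop :=
  ∀ v : V,
    ({w | Relation.ReflTransGen (fun a b => G.Adj a b ∧ c a = c b) v w} : Set V).ncard ≤ t

/-- The `t`-clustered chromatic number. -/
noncomputable def clusteredChromaticNumber (G : SimpleGraph V) (t : ℕ) : ℕ :=
  sInf {n | ∃ c : V → Fin n, IsClusteredColoring G t c}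

/-- The chromatic number: least `n` admitting a proper colouring with `n` colours. -/
noncomputable def chromNum (G : SimpleGraph V) : ℕ :=
  sInf {n | ∃ c : V → Fin n, ∀ u v, G.Adj u v → c u ≠ c v}

/-- The `b`-fold `d`-improper chromatic number: least number of colours in an assignment
of `b` colours to each vertex such that, for every colour `x`, the set of vertices whose
colour set contains `x` induces a subgraph of maximum degree at most `d`. -/
noncomputable def bFoldImproperChromaticNumber (G : SimpleGraph V) (b d : ℕ) : ℕ :=
  sInf {n | ∃ c : V → Finset (Fin n), (∀ v, (c v).card = b) ∧
    ∀ v : V, ∀ x ∈ c v, ({w | G.Adj v w ∧ x ∈ c w} : Set V).ncard ≤ d}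

/-- The (proper) `b`-fold chromatic number. -/
noncomputable def bFoldChromaticNumber (G : SimpleGraph V) (b : ℕ) : ℕ :=
  bFoldImproperChromaticNumber G b 0

/-- The `b`-fold `t`-clustered chromatic number. -/
noncomputable def bFoldClusteredChromaticNumber (G : SimpleGraph V) (b t : ℕ) : ℕ :=
  sInf {n | ∃ c : V → Finset (Fin n), (∀ v, (c v).card = b) ∧
    ∀ x : Fin n, ∀ v : V, x ∈ c v →
      ({w | Relation.ReflTransGen (fun a b' => G.Adj a b' ∧ x ∈ c a ∧ x ∈ c b') v w} :
        Set V).ncard ≤ t}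

/-- The fractional chromatic number `χ_f(G) = inf { χ_b(G)/b : b ≥ 1 }`. -/
noncomputable def fracChromaticNumber (G : SimpleGraph V) : ℝ :=
  sInf {x : ℝ | ∃ b : ℕ, 0 < b ∧ x = (bFoldChromaticNumber G b : ℝ) / b}

/-- The fractional `d`-improper chromatic number. -/
noncomputable def fracImproperChromaticNumber (G : SimpleGraph V) (d : ℕ) : ℝ :=
  sInf {x : ℝ | ∃ b : ℕ, 0 < b ∧ x = (bFoldImproperChromaticNumber G b d : ℝ) / b}

/-- The fractional `t`-clustered chromatic number. -/
noncomputable def fracClusteredChromaticNumber (G : SimpleGraph V) (t : ℕ) : ℝ :=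
  sInf {x : ℝ | ∃ b : ℕ, 0 < b ∧ x = (bFoldClusteredChromaticNumber G b t : ℝ) / b}

/-- `lam` lists the eigenvalues of the Hermitian matrix `A` (with multiplicity) in
non-increasing order. -/
def IsEigList {n : ℕ} {A : Matrix (Fin n) (Fin n) ℝ} (hA : A.IsHermitian)
    (lam : Fin n → ℝ) : Prop :=
  Antitone lam ∧ ∃ σ : Equiv.Perm (Fin n), lam = hA.eigenvalues ∘ σ

/-- The largest size of a vertex subset inducing a subgraph of maximum degree at most `d`. -/
noncomputable def maxImproperIndep (G : SimpleGraph V) (d : ℕ) : ℕ :=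
  sSup {k | ∃ s : Set V, s.ncard = k ∧ ∀ v ∈ s, ({w | w ∈ s ∧ G.Adj v w} : Set V).ncard ≤ d}

end ImproperPaper

/-!
Let `μ` be the least adjacency eigenvalue, so that `A - μ` is positive semidefinite, and put
`t = (d - μ) / (k - μ)`. For a colour class with characteristic vector `x` and size `a`, the
Rayleigh excess `(x - t𝟙)ᵀ (A - μ) (x - t𝟙)` and the improperness excess `d a - xᵀ A x` are
nonnegative and add up to `(d - μ) (t n - a)`. Summed over the `m` classes this is
`t n (m (d - μ) - (k - μ)) ≤ 0`, because `m (d - μ) = λ₁ - μ` and `λ₁ ≤ k`. So every excess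
vanishes: each `x - t𝟙` is a `μ`-eigenvector, i.e. `A x = μ x + (d - μ) 𝟙`, and every class
has size `t n`.
-/

open scoped MatrixOrder

section Spectral

variable {V : Type*} [Fintype V]

lemma Matrix.IsSymm.dotProduct_mulVec_sub_smul_one {A : Matrix V V ℝ} (hA : A.IsSymm) {k : ℝ}
    (hA1 : A *ᵥ 1 = k • 1) (x : V → ℝ) (t μ : ℝ) :
    (x - t • 1) ⬝ᵥ A *ᵥ (x - t • 1) - μ * ((x - t • 1) ⬝ᵥ (x - t • 1)) =
      x ⬝ᵥ A *ᵥ x - μ * (x ⬝ᵥ x) - 2 * t * (k - μ) * (1 ⬝ᵥ x)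
        + t ^ 2 * (k - μ) * Fintype.card V := by
  have h1A : (1 : V → ℝ) ⬝ᵥ A *ᵥ x = k * (1 ⬝ᵥ x) := by
    rw [dotProduct_mulVec, ← mulVec_transpose, hA.eq, hA1, smul_dotProduct, smul_eq_mul]
  have h11 : (1 : V → ℝ) ⬝ᵥ 1 = Fintype.card V := by simp [dotProduct_one]
  simp only [mulVec_sub, mulVec_smul, hA1, sub_dotProduct, dotProduct_sub, smul_dotProduct,
    dotProduct_smul, smul_eq_mul, h1A, h11, dotProduct_comm x 1]
  ring

lemma SimpleGraph.adjMatrix_mulVec_one_of_isRegularOfDegree {G : SimpleGraph V}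
    [DecidableRel G.Adj] {k : ℕ} (hreg : G.IsRegularOfDegree k) :
    G.adjMatrix ℝ *ᵥ 1 = (k : ℝ) • 1 := by
  ext v
  simp [hreg v]

variable [DecidableEq V]

lemma Matrix.algebraMap_mulVec (μ : ℝ) (y : V → ℝ) :
    algebraMap ℝ (Matrix V V ℝ) μ *ᵥ y = μ • y := by
  rw [Algebra.algebraMap_eq_smul_one, smul_mulVec, one_mulVec]

lemma Matrix.IsHermitian.algebraMap_le_of_forall_le_eigenvalues {A : Matrix V V ℝ}
    (hA : A.IsHermitian) {μ : ℝ} (hμ : ∀ i, μ ≤ hA.eigenvalues i) :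
    algebraMap ℝ (Matrix V V ℝ) μ ≤ A := by
  rw [algebraMap_le_iff_le_spectrum hA.isSelfAdjoint, hA.spectrum_real_eq_range_eigenvalues]
  rintro _ ⟨i, rfl⟩
  exact hμ i

lemma Matrix.dotProduct_mulVec_sub_algebraMap {A : Matrix V V ℝ} (μ : ℝ) (y : V → ℝ) :
    y ⬝ᵥ (A - algebraMap ℝ (Matrix V V ℝ) μ) *ᵥ y = y ⬝ᵥ A *ᵥ y - μ * (y ⬝ᵥ y) := by
  rw [sub_mulVec, algebraMap_mulVec, dotProduct_sub, dotProduct_smul, smul_eq_mul]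

lemma Matrix.mul_dotProduct_self_le_of_algebraMap_le {A : Matrix V V ℝ} {μ : ℝ}
    (h : algebraMap ℝ (Matrix V V ℝ) μ ≤ A) (y : V → ℝ) :
    μ * (y ⬝ᵥ y) ≤ y ⬝ᵥ A *ᵥ y := by
  have := (Matrix.le_iff.mp h).dotProduct_mulVec_nonneg y
  rw [star_trivial, dotProduct_mulVec_sub_algebraMap] at this
  linarith

lemma Matrix.mulVec_eq_smul_of_algebraMap_le {A : Matrix V V ℝ} {μ : ℝ}
    (h : algebraMap ℝ (Matrix V V ℝ) μ ≤ A) {y : V → ℝ}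
    (hy : y ⬝ᵥ A *ᵥ y ≤ μ * (y ⬝ᵥ y)) : A *ᵥ y = μ • y := by
  have hzero : y ⬝ᵥ (A - algebraMap ℝ (Matrix V V ℝ) μ) *ᵥ y = 0 := by
    rw [dotProduct_mulVec_sub_algebraMap]
    linarith [mul_dotProduct_self_le_of_algebraMap_le h y]
  have := ((Matrix.le_iff.mp h).dotProduct_mulVec_zero_iff y).mp (by rwa [star_trivial])
  rwa [sub_mulVec, algebraMap_mulVec, sub_eq_zero] at this

namespace SimpleGraph

variable {G : SimpleGraph V} [DecidableRel G.Adj]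

lemma adjMatrix_le_of_isRegularOfDegree {k : ℕ} (hreg : G.IsRegularOfDegree k) :
    G.adjMatrix ℝ ≤ algebraMap ℝ (Matrix V V ℝ) k := by
  have hdeg : G.degMatrix ℝ = algebraMap ℝ (Matrix V V ℝ) k := by
    rw [degMatrix, algebraMap_eq_diagonal]
    congr 1
    ext v
    simp [hreg v]
  rw [Matrix.le_iff, ← hdeg]
  exact G.posSemidef_lapMatrix ℝ

lemma eigenvalues_adjMatrix_le_of_isRegularOfDegree {k : ℕ} (hreg : G.IsRegularOfDegree k)
    (hA : (G.adjMatrix ℝ).IsHermitian) (i : V) : hA.eigenvalues i ≤ k :=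
  (le_algebraMap_iff_spectrum_le hA.isSelfAdjoint).mp (adjMatrix_le_of_isRegularOfDegree hreg) _
    (hA.eigenvalues_mem_spectrum_real i)

lemma le_neg_one_of_algebraMap_le_adjMatrix {u v : V} (huv : G.Adj u v) {μ : ℝ}
    (h : algebraMap ℝ (Matrix V V ℝ) μ ≤ G.adjMatrix ℝ) : μ ≤ -1 := by
  have := mul_dotProduct_self_le_of_algebraMap_le h (Pi.single u 1 - Pi.single v 1)
  simp [sub_dotProduct, dotProduct_sub, mulVec_sub, single_dotProduct, huv, huv.symm,
    G.ne_of_adj huv, (G.ne_of_adj huv).symm] at this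
  linarith

end SimpleGraph

end Spectral

namespace ImproperPaper

variable {V α : Type*} [DecidableEq α]

def colorClassVec (c : V → α) (j : α) : V → ℝ := fun v => if c v = j then 1 else 0

lemma sum_colorClassVec [Fintype α] (c : V → α) : ∑ j, colorClassVec c j = 1 := by
  ext v
  simp [colorClassVec, Finset.sum_apply]

variable [Fintype V]

lemma colorClassVec_dotProduct_self (c : V → α) (j : α) :
    colorClassVec c j ⬝ᵥ colorClassVec c j = 1 ⬝ᵥ colorClassVec c j := by
  simp only [dotProduct, colorClassVec]
  congr 1 with v
  split_ifs <;> simp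

lemma one_dotProduct_colorClassVec (c : V → α) (j : α) :
    1 ⬝ᵥ colorClassVec c j = ({v | c v = j} : Set V).ncard := by
  simp [dotProduct, colorClassVec, Finset.sum_boole, Set.ncard_eq_toFinset_card']

lemma adjMatrix_mulVec_colorClassVec_apply (G : SimpleGraph V) [DecidableRel G.Adj] (c : V → α)
    (j : α) (v : V) :
    (G.adjMatrix ℝ *ᵥ colorClassVec c j) v = ({w | G.Adj v w ∧ c w = j} : Set V).ncard := by
  rw [adjMatrix_mulVec_apply]
  simp only [colorClassVec, Finset.sum_boole, Set.ncard_eq_toFinset_card', Set.toFinset_ofPred]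
  rw [← Finset.filter_filter, neighborFinset_eq_filter]

lemma IsImproperColoring.colorClassVec_dotProduct_adjMatrix_mulVec_le {G : SimpleGraph V}
    [DecidableRel G.Adj] {d : ℕ} {c : V → α} (hc : IsImproperColoring G d c) (j : α) :
    colorClassVec c j ⬝ᵥ G.adjMatrix ℝ *ᵥ colorClassVec c j ≤ d * (1 ⬝ᵥ colorClassVec c j) := by
  rw [dotProduct_comm 1, ← smul_eq_mul, ← dotProduct_smul]
  refine Finset.sum_le_sum fun v _ => ?_
  by_cases hv : c v = j
  · simp only [colorClassVec, hv, if_true, one_mul, Pi.smul_apply, Pi.one_apply, smul_eq_mul,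
      mul_one, adjMatrix_mulVec_colorClassVec_apply]
    exact_mod_cast hv ▸ hc v
  · simp [colorClassVec, hv]

lemma excess_add_excess_colorClassVec {G : SimpleGraph V} [DecidableRel G.Adj] {k d : ℕ}
    (hreg : G.IsRegularOfDegree k) {t μ : ℝ} (ht : t * (k - μ) = d - μ) (c : V → α) (j : α) :
    ((colorClassVec c j - t • 1) ⬝ᵥ G.adjMatrix ℝ *ᵥ (colorClassVec c j - t • 1) -
        μ * ((colorClassVec c j - t • 1) ⬝ᵥ (colorClassVec c j - t • 1))) +
      (d * (1 ⬝ᵥ colorClassVec c j) - colorClassVec c j ⬝ᵥ G.adjMatrix ℝ *ᵥ colorClassVec c j) =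
      (d - μ) * (t * Fintype.card V - 1 ⬝ᵥ colorClassVec c j) := by
  rw [G.isSymm_adjMatrix.dotProduct_mulVec_sub_smul_one
    (adjMatrix_mulVec_one_of_isRegularOfDegree hreg), colorClassVec_dotProduct_self]
  linear_combination (t * Fintype.card V - 2 * (1 ⬝ᵥ colorClassVec c j)) * ht

theorem IsImproperColoring.adjMatrix_mulVec_colorClassVec_eq [DecidableEq V] [Fintype α]
    {G : SimpleGraph V} [DecidableRel G.Adj] {k d : ℕ} {μ : ℝ} (hreg : G.IsRegularOfDegree k)
    (hμ : algebraMap ℝ (Matrix V V ℝ) μ ≤ G.adjMatrix ℝ) (hμ0 : μ < 0)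
    (hα : Fintype.card α * (d - μ) ≤ k - μ) {c : V → α} (hc : IsImproperColoring G d c) (j : α) :
    G.adjMatrix ℝ *ᵥ colorClassVec c j = μ • colorClassVec c j + (d - μ) • 1 ∧
      (k - μ) * (1 ⬝ᵥ colorClassVec c j) = (d - μ) * Fintype.card V := by
  have hA1 := adjMatrix_mulVec_one_of_isRegularOfDegree hreg
  have hkμ : 0 < (k : ℝ) - μ := by linarith [(k.cast_nonneg : (0 : ℝ) ≤ k)]
  obtain ⟨t, ht, ht0⟩ : ∃ t : ℝ, t * (k - μ) = d - μ ∧ 0 ≤ t :=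
    ⟨_, div_mul_cancel₀ _ hkμ.ne', div_nonneg (by linarith [(d.cast_nonneg : (0 : ℝ) ≤ d)]) hkμ.le⟩
  set P : α → ℝ := fun i =>
    (colorClassVec c i - t • 1) ⬝ᵥ G.adjMatrix ℝ *ᵥ (colorClassVec c i - t • 1) -
      μ * ((colorClassVec c i - t • 1) ⬝ᵥ (colorClassVec c i - t • 1))
  set Q : α → ℝ := fun i =>
    d * (1 ⬝ᵥ colorClassVec c i) - colorClassVec c i ⬝ᵥ G.adjMatrix ℝ *ᵥ colorClassVec c i
  have hP : ∀ i, 0 ≤ P i := fun i => by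
    linarith [mul_dotProduct_self_le_of_algebraMap_le hμ (colorClassVec c i - t • 1)]
  have hQ : ∀ i, 0 ≤ Q i := fun i => by
    linarith [hc.colorClassVec_dotProduct_adjMatrix_mulVec_le i]
  have hPQ : ∀ i, P i + Q i = (d - μ) * (t * Fintype.card V - 1 ⬝ᵥ colorClassVec c i) :=
    excess_add_excess_colorClassVec hreg ht c
  have hsum : ∑ i, (P i + Q i) ≤ 0 := by
    have h1x : ∑ i, (1 : V → ℝ) ⬝ᵥ colorClassVec c i = Fintype.card V := by
      rw [← dotProduct_sum, sum_colorClassVec, dotProduct_one]; simp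
    have : ∑ i, (P i + Q i) =
        t * Fintype.card V * (Fintype.card α * (d - μ) - (k - μ)) := by
      simp only [hPQ, ← Finset.mul_sum, Finset.sum_sub_distrib, h1x, Finset.sum_const,
        Finset.card_univ, nsmul_eq_mul]
      linear_combination (Fintype.card V : ℝ) * ht
    rw [this]
    exact mul_nonpos_of_nonneg_of_nonpos (by positivity) (by linarith)
  have hzero : ∀ i, P i + Q i = 0 := fun i =>
    (Finset.sum_eq_zero_iff_of_nonneg fun i _ => add_nonneg (hP i) (hQ i)).mp
      (le_antisymm hsum (Finset.sum_nonneg fun i _ => add_nonneg (hP i) (hQ i))) i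
      (Finset.mem_univ i)
  have heig : G.adjMatrix ℝ *ᵥ (colorClassVec c j - t • 1) = μ • (colorClassVec c j - t • 1) :=
    mulVec_eq_smul_of_algebraMap_le hμ (by linarith [hzero j, hP j, hQ j])
  constructor
  · ext v
    have := congrFun heig v
    simp only [mulVec_sub, mulVec_smul, hA1, Pi.sub_apply, Pi.smul_apply, Pi.add_apply,
      Pi.one_apply, smul_eq_mul] at this ⊢
    linear_combination this + ht
  · have hsize : 1 ⬝ᵥ colorClassVec c j = t * Fintype.card V := by
      have hdμ : (d : ℝ) - μ ≠ 0 := by linarith [(d.cast_nonneg : (0 : ℝ) ≤ d)]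
      have := hPQ j
      rw [hzero j, eq_comm, mul_eq_zero] at this
      exact (sub_eq_zero.mp (this.resolve_left hdμ)).symm
    rw [hsize]
    linear_combination (Fintype.card V : ℝ) * ht

end ImproperPaper

open ImproperPaper in

theorem stmt_3 {n : ℕ} (hn : 1 ≤ n) (G : SimpleGraph (Fin n)) [DecidableRel G.Adj]
    (hedge : ∃ u v : Fin n, G.Adj u v) (k d m : ℕ)
    (hreg : G.IsRegularOfDegree k)
    (hA : (G.adjMatrix ℝ).IsHermitian) (lam : Fin n → ℝ) (hlam : IsEigList hA lam)
    (heq : (m : ℝ) =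
      (lam ⟨0, by omega⟩ - lam ⟨n - 1, by omega⟩) / ((d : ℝ) - lam ⟨n - 1, by omega⟩)) :
    ∀ c : Fin n → Fin m, IsImproperColoring G d c →
      (∀ v : Fin n, ({w | G.Adj v w ∧ c w = c v} : Set (Fin n)).ncard = d) ∧
      (∀ v : Fin n, ∀ j : Fin m, j ≠ c v →
        (({w | G.Adj v w ∧ c w = j} : Set (Fin n)).ncard : ℝ) =
          (d : ℝ) - lam ⟨n - 1, by omega⟩) ∧
      (∀ i j : Fin m,
        ({v : Fin n | c v = i} : Set (Fin n)).ncard =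
          ({v : Fin n | c v = j} : Set (Fin n)).ncard) := by
  intro c hc
  obtain ⟨hanti, σ, hσ⟩ := hlam
  obtain ⟨u, v, huv⟩ := hedge
  set μ := lam ⟨n - 1, by omega⟩ with hμ_def
  have hμ : ∀ i, μ ≤ hA.eigenvalues i := fun i => by
    simpa [hμ_def, hσ] using hanti (show σ.symm i ≤ ⟨n - 1, by omega⟩ from Fin.mk_le_mk.mpr (by omega))
  have hμA := hA.algebraMap_le_of_forall_le_eigenvalues hμ
  have hμ0 := (le_neg_one_of_algebraMap_le_adjMatrix huv hμA).trans_lt neg_one_lt_zero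
  have hα : Fintype.card (Fin m) * (d - μ) ≤ k - μ := by
    rw [Fintype.card_fin, heq, div_mul_cancel₀ _ (by linarith [(d.cast_nonneg : (0 : ℝ) ≤ d)])]
    simpa [hσ] using eigenvalues_adjMatrix_le_of_isRegularOfDegree hreg hA (σ ⟨0, by omega⟩)
  have key := hc.adjMatrix_mulVec_colorClassVec_eq hreg hμA hμ0 hα
  refine ⟨fun v => ?_, fun v j hj => ?_, fun i j => ?_⟩
  · have := congrFun (key (c v)).1 v
    rw [adjMatrix_mulVec_colorClassVec_apply] at this
    simpa only [Pi.add_apply, Pi.smul_apply, colorClassVec, ↓reduceIte, smul_eq_mul, mul_one,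
      Pi.one_apply, add_sub_cancel, Nat.cast_inj] using this
  · have := congrFun (key j).1 v
    rw [adjMatrix_mulVec_colorClassVec_apply] at this
    simpa [colorClassVec, Ne.symm hj] using this
  · have hij := (key i).2.trans (key j).2.symm
    rw [one_dotProduct_colorClassVec, one_dotProduct_colorClassVec] at hij
    exact_mod_cast mul_left_cancel₀ (by linarith [(k.cast_nonneg : (0 : ℝ) ≤ k)]) hij
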